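/- arXiv:2101.09111 — 3 statements merged into one kernel-verified Lean document; each statement's English description precedes it below -/
import Mathlib

section
/- Let (V,E) be an interval graph, W = {(a,b) : ¬(a E b)}, and Q as defined. If the graph (W,Q) has exactly two connected components, then (V,E) is uniquely orderable. -/
open Set

variable {V : Type*}

/-- An interval representation of a graph `E` over a linear order `L`. -/
def IsIntervalRep {V : Type*} {L : Type} [LinearOrder L] (E : V → V → Prop)
    (fL fR : V → L) : Prop :=
  (∀ v, fL v ≤ fR v) ∧ ∀ u v, E u v ↔ (fL u ≤ fR v ∧ fL v ≤ fR u)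

/-- `E` is a (reflexive, symmetric) interval graph. -/
def IsIntervalGraph {V : Type*} (E : V → V → Prop) : Prop :=
  (∀ v, E v v) ∧ (∀ u v, E u v → E v u) ∧
    ∃ (L : Type) (_ : LinearOrder L) (fL fR : V → L), IsIntervalRep E fL fR

/-- `p 0, …, p n` is a path in `E`. -/
def IsPath {V : Type*} (E : V → V → Prop) (p : ℕ → V) (n : ℕ) : Prop :=
  ∀ i < n, E (p i) (p (i + 1))

/-- A minimal path: no chords. -/
def IsMinimalPath {V : Type*} (E : V → V → Prop) (p : ℕ → V) (n : ℕ) : Prop :=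
  IsPath E p n ∧ ∀ i j, i + 1 < j → j ≤ n → ¬ E (p i) (p j)

/-- Two vertices are connected by a path. -/
def Reach {V : Type*} (E : V → V → Prop) (u v : V) : Prop :=
  ∃ (n : ℕ) (p : ℕ → V), IsPath E p n ∧ p 0 = u ∧ p n = v

def Connected {V : Type*} (E : V → V → Prop) : Prop := ∀ u v, Reach E u v

/-- `r` is a strict partial order associated to the graph `E` (i.e. `E` is the
incomparability graph of `r`). -/
def IsAssociated {V : Type*} (E r : V → V → Prop) : Prop :=
  (∀ v, ¬ r v v) ∧ (∀ a b c, r a b → r b c → r a c) ∧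
    ∀ u v, ¬ E u v ↔ (r u v ∨ r v u)

/-- `E` is uniquely orderable: it has an associated partial order, unique up to duality. -/
def UniquelyOrderable {V : Type*} (E : V → V → Prop) : Prop :=
  ∃ r, IsAssociated E r ∧ ∀ r', IsAssociated E r' → r' = r ∨ r' = flip r

def Kset {V : Type*} (E : V → V → Prop) (B : Set V) : Set V := {v | ∀ b ∈ B, E v b}

def Rset {V : Type*} (E : V → V → Prop) (B : Set V) : Set V :=
  {v | v ∉ B ∧ v ∉ Kset E B}

/-- `B` is a buried subgraph of `E`. -/
def Buried {V : Type*} (E : V → V → Prop) (B : Set V) : Prop :=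
  (∃ a ∈ B, ∃ b ∈ B, ¬ E a b) ∧ (∀ b ∈ B, b ∉ Kset E B) ∧
    (Rset E B).Nonempty ∧ ∀ b ∈ B, ∀ r ∈ Rset E B, ¬ E b r

/-- The set `W` of non-adjacent ordered pairs. -/
def Wset {V : Type*} (E : V → V → Prop) : Set (V × V) := {p | ¬ E p.1 p.2}

/-- The relation `Q` on pairs. -/
def Qrel {V : Type*} (E : V → V → Prop) (p q : V × V) : Prop :=
  E p.1 q.1 ∧ E p.2 q.2

/-- `p` and `q` are connected by a `Q`-path inside `W`. -/
def QReach {V : Type*} (E : V → V → Prop) (p q : V × V) : Prop :=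
  ∃ (n : ℕ) (c : ℕ → V × V), c 0 = p ∧ c n = q ∧ (∀ i ≤ n, c i ∈ Wset E) ∧
    ∀ i < n, Qrel E (c i) (c (i + 1))

/-- The sets `B_n(v,u)` of the standard construction. -/
def Bfam {V : Type*} (E : V → V → Prop) (v u : V) : ℕ → Set V
  | 0 => {v, u}
  | n + 1 => {w | ∃ z ∈ Bfam E v u n, ∃ z' ∈ Bfam E v u n, E z w ∧ ¬ E z' w}

/-- `B(v,u) = ⋃ n, B_n(v,u)`. -/
def Bset {V : Type*} (E : V → V → Prop) (v u : V) : Set V := ⋃ n, Bfam E v u n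

/-- The least `n` with `w ∈ B_n(v,u)`. -/
noncomputable def eLevel {V : Type*} (E : V → V → Prop) (v u w : V) : ℕ :=
  sInf {n | w ∈ Bfam E v u n}

/-!
Every associated order `r` orients each non-adjacent pair `(a, b)` one way or the other, and in a
graph without induced 4-cycles this orientation is preserved along `Q`-edges: if `r a b`, `r d c`,
`a E c` and `b E d`, then transitivity of `r` forces `a E d` and `b E c`, giving the induced 4-cycle
`a c b d`. So an associated order is constant on each component of `(W, Q)`, and it reverses under
`(a, b) ↦ (b, a)`; hence a pair and its swap always lie in different components. With only two
components, every pair or its swap lies in the component of `p`, so any associated order is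
determined by its value at `p`: it is the one given by the interval representation or its dual.
-/

def InducedC4Free (E : V → V → Prop) : Prop :=
  ∀ a b c d, ¬ E a b → ¬ E c d → E a c → E b d → E a d → E b c → False

namespace IsIntervalRep

variable {L : Type} [LinearOrder L] {E : V → V → Prop} {fL fR : V → L}

theorem inducedC4Free (hrep : IsIntervalRep E fL fR) : InducedC4Free E := by
  intro a b c d hab hcd hac hbd had hbc
  simp only [hrep.2, not_and_or, not_le] at hab hcd hac hbd had hbc
  rcases hab with hab | hab <;> rcases hcd with hcd | hcd <;> order

theorem isAssociated (hrep : IsIntervalRep E fL fR) :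
    IsAssociated E (fun u v => fR u < fL v) := by
  refine ⟨fun v => (hrep.1 v).not_gt, fun a b c hab hbc => ?_, fun u v => ?_⟩
  · exact hab.trans_le ((hrep.1 b).trans_lt hbc).le
  · rw [hrep.2, not_and_or, not_le, not_le, or_comm]

end IsIntervalRep

namespace IsAssociated

variable {E r r' : V → V → Prop}

theorem not_adj_of_rel (hr : IsAssociated E r) {u v : V} (h : r u v) : ¬ E u v :=
  (hr.2.2 u v).2 (.inl h)

theorem adj_symm (hr : IsAssociated E r) {u v : V} (h : E u v) : E v u :=
  not_not.1 fun h' => (hr.2.2 u v).2 ((hr.2.2 v u).1 h').symm h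

theorem rel_iff_not_rel (hr : IsAssociated E r) {u v : V} (h : ¬ E u v) :
    r u v ↔ ¬ r v u :=
  ⟨fun huv hvu => hr.1 u (hr.2.1 _ _ _ huv hvu), ((hr.2.2 u v).1 h).resolve_right⟩

protected theorem flip (hr : IsAssociated E r) : IsAssociated E (flip r) :=
  ⟨hr.1, fun _ _ _ hab hbc => hr.2.1 _ _ _ hbc hab, fun u v => (hr.2.2 u v).trans or_comm⟩

theorem eq_of_forall_not_adj (hr : IsAssociated E r) (hr' : IsAssociated E r')
    (h : ∀ u v, ¬ E u v → (r' u v ↔ r u v)) : r' = r := by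
  funext u v
  apply propext
  by_cases huv : E u v
  · exact iff_of_false (fun h => hr'.not_adj_of_rel h huv) (fun h => hr.not_adj_of_rel h huv)
  · exact h u v huv

theorem rel_of_qrel (hC4 : InducedC4Free E) (hr : IsAssociated E r) {a b c d : V}
    (hab : ¬ E a b) (hcd : ¬ E c d) (hac : E a c) (hbd : E b d) (h : r a b) : r c d := by
  refine ((hr.2.2 c d).1 hcd).resolve_right fun hdc => hC4 a b c d hab hcd hac hbd ?_ ?_
  · by_contra had
    rcases (hr.2.2 a d).1 had with had | hda
    · exact hr.not_adj_of_rel (hr.2.1 _ _ _ had hdc) hac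
    · exact hr.not_adj_of_rel (hr.2.1 _ _ _ hda h) (hr.adj_symm hbd)
  · by_contra hbc
    rcases (hr.2.2 b c).1 hbc with hbc | hcb
    · exact hr.not_adj_of_rel (hr.2.1 _ _ _ h hbc) hac
    · exact hr.not_adj_of_rel (hr.2.1 _ _ _ hdc hcb) (hr.adj_symm hbd)

theorem rel_iff_of_qReach (hC4 : InducedC4Free E) (hr : IsAssociated E r) {s t : V × V}
    (hst : QReach E s t) : r s.1 s.2 ↔ r t.1 t.2 := by
  obtain ⟨n, c, rfl, rfl, hW, hQ⟩ := hst
  induction n with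
  | zero => rfl
  | succ n ih =>
    refine (ih (fun i hi => hW i (by omega)) fun i hi => hQ i (by omega)).trans ?_
    have hcn : ¬ E (c n).1 (c n).2 := hW n (by omega)
    have hcn' : ¬ E (c (n + 1)).1 (c (n + 1)).2 := hW (n + 1) le_rfl
    obtain ⟨h1, h2⟩ := hQ n (by omega)
    exact ⟨hr.rel_of_qrel hC4 hcn hcn' h1 h2,
      hr.rel_of_qrel hC4 hcn' hcn (hr.adj_symm h1) (hr.adj_symm h2)⟩

theorem qReach_or_qReach_swap (hC4 : InducedC4Free E) (hr : IsAssociated E r) {p q : V × V}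
    (hcover : ∀ s ∈ Wset E, QReach E s p ∨ QReach E s q) {s : V × V} (hs : s ∈ Wset E) :
    QReach E s p ∨ QReach E s.swap p := by
  refine (hcover s hs).imp_right fun hsq => ?_
  refine (hcover s.swap fun h => hs (hr.adj_symm h)).resolve_right fun hsq' => ?_
  exact iff_not_self (((hr.rel_iff_of_qReach hC4 hsq').trans
    (hr.rel_iff_of_qReach hC4 hsq).symm).trans (hr.rel_iff_not_rel hs))

theorem eq_or_eq_flip (hC4 : InducedC4Free E) (hr : IsAssociated E r)
    (hr' : IsAssociated E r') {p : V × V}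
    (hreach : ∀ s ∈ Wset E, QReach E s p ∨ QReach E s.swap p) : r' = r ∨ r' = flip r := by
  have agree : ∀ u v, ¬ E u v → ((r' u v ↔ r u v) ↔ (r' p.1 p.2 ↔ r p.1 p.2)) := by
    intro u v huv
    rcases hreach (u, v) huv with h | h
    · exact iff_congr (hr'.rel_iff_of_qReach hC4 h) (hr.rel_iff_of_qReach hC4 h)
    · exact (iff_congr (hr'.rel_iff_not_rel huv) (hr.rel_iff_not_rel huv)).trans <|
        not_iff_not.trans <| iff_congr (hr'.rel_iff_of_qReach hC4 h) (hr.rel_iff_of_qReach hC4 h)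
  by_cases hp : r' p.1 p.2 ↔ r p.1 p.2
  · exact .inl <| hr.eq_of_forall_not_adj hr' fun u v huv => (agree u v huv).2 hp
  · refine .inr <| hr.flip.eq_of_forall_not_adj hr' fun u v huv => ?_
    have hdisagree := mt (agree u v huv).1 hp
    have hflip := hr.rel_iff_not_rel huv
    change r' u v ↔ r v u
    tauto

end IsAssociated

/-- if (W,Q) has exactly two components then E is uniquely orderable. -/
theorem stmt7 {V : Type*} (E : V → V → Prop) (hIG : IsIntervalGraph E)
    (htwo : ∃ p q : V × V, p ∈ Wset E ∧ q ∈ Wset E ∧ ¬ QReach E p q ∧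
      ∀ s ∈ Wset E, QReach E s p ∨ QReach E s q) :
    UniquelyOrderable E := by
  obtain ⟨-, -, L, _, fL, fR, hrep⟩ := hIG
  obtain ⟨p, q, -, -, -, hcover⟩ := htwo
  have hC4 := hrep.inducedC4Free
  have hr := hrep.isAssociated
  exact ⟨_, hr, fun r' hr' =>
    hr.eq_or_eq_flip hC4 hr' fun s hs => hr.qReach_or_qReach_swap hC4 hcover hs⟩
end

section
/- Let (V,E) be a graph with a buried subgraph B and ≺₀ a partial order associated to (V,E) such that B is ≺₀-convex (if b ≺₀ v ≺₀ b' with b,b' ∈ B then v ∈ B). Define ≺' by: u ≺' v iff either (u,v ∈ B and v ≺₀ u) or (at least one of u,v is not in B and u ≺₀ v). Then ≺' is a partial order associated to (V,E) which is neither ≺₀ nor its dual. -/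
/-!
A vertex outside `B` that is comparable to some vertex of `B` is not in `K(B)`, so it lies in
`R(B)` and is therefore comparable to every vertex of `B`; by convexity it lies on the same side
of all of them. Thus `B` is autonomous for `≺₀`, and reversing a partial order inside an
autonomous set gives a partial order with the same comparabilities. The result differs from `≺₀`
on a non-adjacent pair inside `B`, and from its dual on a pair between `B` and `R(B)`.
-/

open Set

variable {V : Type*}

def reverseOn (B : Set V) (r : V → V → Prop) (u v : V) : Prop :=
  (u ∈ B ∧ v ∈ B ∧ r v u) ∨ ((u ∉ B ∨ v ∉ B) ∧ r u v)

def IsAutonomous (r : V → V → Prop) (B : Set V) : Prop :=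
  ∀ ⦃a b c⦄, a ∈ B → b ∈ B → c ∉ B → (r b c → r a c) ∧ (r c b → r c a)

section reverseOn

variable {B : Set V} {r : V → V → Prop} {u v : V}

theorem reverseOn_of_mem (hu : u ∈ B) (hv : v ∈ B) : reverseOn B r u v ↔ r v u := by
  simp [reverseOn, hu, hv]

theorem reverseOn_of_notMem_left (hu : u ∉ B) : reverseOn B r u v ↔ r u v := by
  simp [reverseOn, hu]

theorem reverseOn_of_notMem_right (hv : v ∉ B) : reverseOn B r u v ↔ r u v := by
  simp [reverseOn, hv]

theorem reverseOn_or_reverseOn_iff :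
    reverseOn B r u v ∨ reverseOn B r v u ↔ r u v ∨ r v u := by
  by_cases hu : u ∈ B
  · by_cases hv : v ∈ B
    · rw [reverseOn_of_mem hu hv, reverseOn_of_mem hv hu, or_comm]
    · rw [reverseOn_of_notMem_right hv, reverseOn_of_notMem_left hv]
  · rw [reverseOn_of_notMem_left hu, reverseOn_of_notMem_right hu]

theorem reverseOn_irrefl (hirr : ∀ v, ¬ r v v) : ∀ v, ¬ reverseOn B r v v := by
  rintro v (⟨-, -, h⟩ | ⟨-, h⟩) <;> exact hirr v h

theorem reverseOn_trans (hirr : ∀ v, ¬ r v v)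
    (htrans : ∀ a b c, r a b → r b c → r a c) (hB : IsAutonomous r B) :
    ∀ a b c, reverseOn B r a b → reverseOn B r b c → reverseOn B r a c := by
  intro a b c hab hbc
  by_cases ha : a ∈ B <;> by_cases hb : b ∈ B <;> by_cases hc : c ∈ B <;>
    simp only [reverseOn_of_mem, reverseOn_of_notMem_left, reverseOn_of_notMem_right, ha, hb, hc,
      not_false_eq_true] at hab hbc ⊢
  · exact htrans _ _ _ hbc hab
  · exact (hB ha hb hc).1 hbc
  · exact absurd (htrans _ _ _ hbc ((hB hc ha hb).1 hab)) (hirr b)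
  · exact htrans _ _ _ hab hbc
  · exact (hB hc hb ha).2 hab
  all_goals exact htrans _ _ _ hab hbc

theorem reverseOn_ne_self (hirr : ∀ v, ¬ r v v)
    (htrans : ∀ a b c, r a b → r b c → r a c) {a b : V} (ha : a ∈ B)
    (hb : b ∈ B) (hab : r a b) : reverseOn B r ≠ r := by
  intro h
  have hba : r b a := h ▸ (reverseOn_of_mem hb ha).2 hab
  exact hirr a (htrans _ _ _ hab hba)

theorem reverseOn_ne_flip (hirr : ∀ v, ¬ r v v)
    (htrans : ∀ a b c, r a b → r b c → r a c) {a x : V}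
    (hx : x ∉ B) (hax : r a x ∨ r x a) : reverseOn B r ≠ flip r := by
  intro h
  rcases hax with hax | hxa
  · have : flip r a x := h ▸ (reverseOn_of_notMem_right hx).2 hax
    exact hirr a (htrans _ _ _ hax this)
  · have : flip r x a := h ▸ (reverseOn_of_notMem_left hx).2 hxa
    exact hirr x (htrans _ _ _ hxa this)

end reverseOn

namespace IsAssociated

variable {E r : V → V → Prop}

theorem reverseOn {B : Set V} (hr : IsAssociated E r) (hB : IsAutonomous r B) :
    IsAssociated E (reverseOn B r) :=
  ⟨reverseOn_irrefl hr.1, reverseOn_trans hr.1 hr.2.1 hB,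
    fun u v => (hr.2.2 u v).trans reverseOn_or_reverseOn_iff.symm⟩

end IsAssociated

theorem isAutonomous_of_not_adj_rset {E r : V → V → Prop} {B : Set V}
    (hE : ∀ u v, ¬ E u v ↔ r u v ∨ r v u) (hBR : ∀ b ∈ B, ∀ x ∈ Rset E B, ¬ E b x)
    (hconv : ∀ b v b', b ∈ B → b' ∈ B → r b v → r v b' → v ∈ B) :
    IsAutonomous r B := by
  intro a b c ha hb hc
  have hR : (r b c ∨ r c b) → c ∈ Rset E B := fun hbc =>
    ⟨hc, fun hK => (hE c b).2 hbc.symm (hK b hb)⟩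
  refine ⟨fun hbc => ?_, fun hcb => ?_⟩
  · exact ((hE a c).1 (hBR a ha c (hR (.inl hbc)))).resolve_right
      fun hca => hc (hconv b c a hb ha hbc hca)
  · exact ((hE a c).1 (hBR a ha c (hR (.inr hcb)))).resolve_left
      fun hac => hc (hconv a c b ha hb hac hcb)

theorem stmt9_general {V : Type*} (E : V → V → Prop) (B : Set V) (hB : Buried E B)
    (r₀ : V → V → Prop) (hr₀ : IsAssociated E r₀)
    (hconv : ∀ b v b', b ∈ B → b' ∈ B → r₀ b v → r₀ v b' → v ∈ B)
    (r' : V → V → Prop)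
    (hr' : ∀ u v, r' u v ↔
      ((u ∈ B ∧ v ∈ B ∧ r₀ v u) ∨ ((u ∉ B ∨ v ∉ B) ∧ r₀ u v))) :
    IsAssociated E r' ∧ r' ≠ r₀ ∧ r' ≠ flip r₀ := by
  obtain ⟨⟨a, ha, b, hb, hab⟩, -, ⟨x, hx⟩, hBR⟩ := hB
  obtain rfl : r' = reverseOn B r₀ := funext₂ fun u v => propext (hr' u v)
  obtain ⟨hirr, htrans, hE⟩ := id hr₀
  refine ⟨hr₀.reverseOn (isAutonomous_of_not_adj_rset hE hBR hconv), ?_,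
    reverseOn_ne_flip hirr htrans hx.1 ((hE a x).1 (hBR a ha x hx))⟩
  rcases (hE a b).1 hab with h | h
  · exact reverseOn_ne_self hirr htrans ha hb h
  · exact reverseOn_ne_self hirr htrans hb ha h

theorem stmt9 {V : Type*} (E : V → V → Prop) (hrefl : ∀ v, E v v)
    (hsymm : ∀ u v, E u v → E v u) (B : Set V) (hB : Buried E B)
    (r₀ : V → V → Prop) (hr₀ : IsAssociated E r₀)
    (hconv : ∀ b v b', b ∈ B → b' ∈ B → r₀ b v → r₀ v b' → v ∈ B)
    (r' : V → V → Prop)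
    (hr' : ∀ u v, r' u v ↔
      ((u ∈ B ∧ v ∈ B ∧ r₀ v u) ∨ ((u ∉ B ∨ v ∉ B) ∧ r₀ u v))) :
    IsAssociated E r' ∧ r' ≠ r₀ ∧ r' ≠ flip r₀ :=
  stmt9_general E B hB r₀ hr₀ hconv r' hr'
end

section
/- Let (V,E) be a connected interval graph with representation (L,<,f_L,f_R), v,u ∈ V with ¬(v E u) and F(v) < F(u), and B(v,u) the standard construction. If x,y ∈ B(v,u) satisfy f_R(x) ≤ f_R(v) and f_L(u) ≤ f_L(y), then (v,u) and (x,y) are connected by a Q-path in the graph (W,Q), where W = {(a,b) : ¬(a E b)} and (a,b) Q (c,d) iff a E c ∧ b E d. -/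
/-!
Induct on the sum of the levels of `x` and `y` in `B(v,u)`. A vertex of positive level has a
neighbour of lower level in `B(v,u)`; by induction, replacing `x` (or `y`) by it gives a
reachable pair one `Q`-step away from `(x,y)`, unless that neighbour is a *giant*, an interval
meeting both `x` and `y`. A giant `t` has a non-neighbour `s` of lower level lying entirely on one side of `t`,
and the detour `(s,u) → (s,t) → (s,y)` (or its mirror image through `(v,s)`) either reaches
`(x,y)` or leaves a reachable pair `(c,y)` with `c` strictly left of `x` (or `(x,c)` with `c`
strictly right of `y`). Such an outer partner `c` is walked back towards `x` along its
lower-level neighbours, each of which is again a giant or an outer partner of lower level, so a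
secondary induction on the level closes the argument.
-/

open Set

variable {V : Type*}

namespace IsIntervalRep

variable {L : Type} [LinearOrder L] {E : V → V → Prop} {fL fR : V → L} {a b : V}

theorem adj_iff (hrep : IsIntervalRep E fL fR) : E a b ↔ fL a ≤ fR b ∧ fL b ≤ fR a :=
  hrep.2 a b

theorem adj_self (hrep : IsIntervalRep E fL fR) (a : V) : E a a :=
  hrep.adj_iff.2 ⟨hrep.1 a, hrep.1 a⟩

theorem adj_symm (hrep : IsIntervalRep E fL fR) (h : E a b) : E b a :=
  hrep.adj_iff.2 (hrep.adj_iff.1 h).symm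

theorem adj_of_le (hrep : IsIntervalRep E fL fR) (hab : fL a ≤ fR b) (hba : fL b ≤ fR a) :
    E a b :=
  hrep.adj_iff.2 ⟨hab, hba⟩

theorem not_adj_of_lt (hrep : IsIntervalRep E fL fR) (h : fR a < fL b) : ¬ E a b :=
  fun hab => (hrep.adj_iff.1 hab).2.not_gt h

theorem lt_or_lt_of_not_adj (hrep : IsIntervalRep E fL fR) (h : ¬ E a b) :
    fR a < fL b ∨ fR b < fL a := by
  rw [hrep.adj_iff, not_and_or, not_le, not_le] at h
  exact h.symm

end IsIntervalRep

section QReach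

variable {E : V → V → Prop} {p q r : V × V}

theorem QReach.refl (hp : p ∈ Wset E) : QReach E p p :=
  ⟨0, fun _ => p, rfl, rfl, fun _ _ => hp, fun _ h => absurd h (Nat.not_lt_zero _)⟩

theorem QReach.tail (h : QReach E p q) (hqr : Qrel E q r) (hr : r ∈ Wset E) :
    QReach E p r := by
  obtain ⟨n, c, hc0, hcn, hW, hQ⟩ := h
  refine ⟨n + 1, fun i => if i ≤ n then c i else r, by simpa using hc0, by simp, ?_, ?_⟩
  · intro i _
    dsimp only
    split_ifs with hi
    exacts [hW i hi, hr]
  · intro i hi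
    rcases (Nat.lt_succ_iff.1 hi).lt_or_eq with hi | rfl
    · simpa [hi.le, Nat.succ_le_of_lt hi] using hQ i hi
    · simpa [hcn] using hqr

theorem QReach.tail_of_lt {L : Type} [LinearOrder L] {fL fR : V → L}
    (hrep : IsIntervalRep E fL fR) {a b a' b' : V} (h : QReach E p (a, b)) (ha : E a a')
    (hb : E b b') (hlt : fR a' < fL b') : QReach E p (a', b') :=
  h.tail ⟨ha, hb⟩ (hrep.not_adj_of_lt hlt)

end QReach

section Levels

variable {E : V → V → Prop} {v u w : V}

theorem mem_Bset_of_mem_Bfam {n : ℕ} (h : w ∈ Bfam E v u n) : w ∈ Bset E v u :=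
  mem_iUnion.2 ⟨n, h⟩

theorem eLevel_le {n : ℕ} (h : w ∈ Bfam E v u n) : eLevel E v u w ≤ n :=
  Nat.sInf_le h

theorem mem_Bfam_eLevel (hw : w ∈ Bset E v u) : w ∈ Bfam E v u (eLevel E v u w) :=
  Nat.sInf_mem (mem_iUnion.1 hw)

theorem left_mem_Bset : v ∈ Bset E v u :=
  mem_Bset_of_mem_Bfam (n := 0) (by simp [Bfam])

theorem right_mem_Bset : u ∈ Bset E v u :=
  mem_Bset_of_mem_Bfam (n := 0) (by simp [Bfam])

theorem eLevel_left : eLevel E v u v = 0 :=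
  Nat.le_zero.1 (eLevel_le (n := 0) (by simp [Bfam]))

theorem eLevel_right : eLevel E v u u = 0 :=
  Nat.le_zero.1 (eLevel_le (n := 0) (by simp [Bfam]))

theorem Bset.eq_or_exists_lower (hw : w ∈ Bset E v u) :
    w = v ∨ w = u ∨
      (∃ z ∈ Bset E v u, eLevel E v u z < eLevel E v u w ∧ E z w) ∧
        ∃ z ∈ Bset E v u, eLevel E v u z < eLevel E v u w ∧ ¬ E z w := by
  have h := mem_Bfam_eLevel hw
  cases hlev : eLevel E v u w with
  | zero =>
    rw [hlev] at h
    simpa [Bfam] using h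
  | succ n =>
    rw [hlev] at h
    obtain ⟨z, hz, z', hz', hzw, hz'w⟩ := h
    exact .inr <| .inr ⟨⟨z, mem_Bset_of_mem_Bfam hz, Nat.lt_succ_of_le (eLevel_le hz), hzw⟩,
      z', mem_Bset_of_mem_Bfam hz', Nat.lt_succ_of_le (eLevel_le hz'), hz'w⟩

end Levels

section SidePairs

variable {L : Type} [LinearOrder L]

def OuterReach (E : V → V → Prop) (fL fR : V → L) (v u x y c : V) : Prop :=
  fR c < fL x ∧ QReach E (v, u) (c, y) ∨ fR y < fL c ∧ QReach E (v, u) (x, c)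

def SidePairsReachableBelow (E : V → V → Prop) (fL fR : V → L) (v u : V) (n : ℕ) : Prop :=
  ∀ x ∈ Bset E v u, ∀ y ∈ Bset E v u, fR x ≤ fR v → fL u ≤ fL y →
    eLevel E v u x + eLevel E v u y < n → QReach E (v, u) (x, y)

variable {E : V → V → Prop} {fL fR : V → L} {v u x y c : V} {n : ℕ}

theorem reach_or_outerReach_of_left (hrep : IsIntervalRep E fL fR) (hxy : fR x < fL y)
    (hcy : QReach E (v, u) (c, y)) (hcx : fL c ≤ fR x) :
    QReach E (v, u) (x, y) ∨ OuterReach E fL fR v u x y c := by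
  by_cases hEcx : E c x
  · exact .inl (hcy.tail_of_lt hrep hEcx (hrep.adj_self y) hxy)
  · exact .inr (.inl ⟨(hrep.lt_or_lt_of_not_adj hEcx).resolve_right hcx.not_gt, hcy⟩)

theorem reach_or_outerReach_of_right (hrep : IsIntervalRep E fL fR) (hxy : fR x < fL y)
    (hxc : QReach E (v, u) (x, c)) (hcy : fL y ≤ fR c) :
    QReach E (v, u) (x, y) ∨ OuterReach E fL fR v u x y c := by
  by_cases hEcy : E c y
  · exact .inl (hxc.tail_of_lt hrep (hrep.adj_self x) hEcy hxy)
  · exact .inr (.inr ⟨(hrep.lt_or_lt_of_not_adj hEcy).resolve_left hcy.not_gt, hxc⟩)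

theorem giant_step (hrep : IsIntervalRep E fL fR) (hord : fR v < fL u)
    (ih : SidePairsReachableBelow E fL fR v u n) (hxv : fR x ≤ fR v) (huy : fL u ≤ fL y)
    {t : V} (ht : t ∈ Bset E v u) (htn : eLevel E v u t < n) (htx : fL t ≤ fR x)
    (hyt : fL y ≤ fR t) :
    QReach E (v, u) (x, y) ∨
      ∃ c ∈ Bset E v u, eLevel E v u c < eLevel E v u t ∧ OuterReach E fL fR v u x y c := by
  have := hrep.1 x; have := hrep.1 y; have := hrep.1 u; have := hrep.1 v
  have hxy : fR x < fL y := by order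
  rcases Bset.eq_or_exists_lower ht with rfl | rfl | ⟨-, s, hs, hslev, hEst⟩
  · order
  · order
  have := hrep.1 s
  rcases hrep.lt_or_lt_of_not_adj hEst with hst | hts
  · have hEut : E u t := hrep.adj_of_le (by order) (by order)
    have hsu := ih s hs u right_mem_Bset (by order) le_rfl (by rw [eLevel_right]; omega)
    have hsy : QReach E (v, u) (s, y) :=
      (hsu.tail_of_lt hrep (hrep.adj_self s) hEut hst).tail_of_lt hrep (hrep.adj_self s)
        (hrep.adj_of_le (by order) hyt) (by order)
    exact (reach_or_outerReach_of_left hrep hxy hsy (by order)).imp_right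
      fun h => ⟨s, hs, hslev, h⟩
  · have hEvt : E v t := hrep.adj_of_le (by order) (by order)
    have hvs := ih v left_mem_Bset s hs le_rfl (by order) (by rw [eLevel_left]; omega)
    have hxs : QReach E (v, u) (x, s) :=
      (hvs.tail_of_lt hrep hEvt (hrep.adj_self s) hts).tail_of_lt hrep
        (hrep.adj_of_le htx (by order)) (hrep.adj_self s) (by order)
    exact (reach_or_outerReach_of_right hrep hxy hxs (by order)).imp_right
      fun h => ⟨s, hs, hslev, h⟩

theorem left_descent_step (hrep : IsIntervalRep E fL fR) (hord : fR v < fL u)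
    (ih : SidePairsReachableBelow E fL fR v u n) (hxv : fR x ≤ fR v) (huy : fL u ≤ fL y)
    (hc : c ∈ Bset E v u) (hcn : eLevel E v u c < n) (hcx : fR c < fL x)
    (hcy : QReach E (v, u) (c, y)) :
    QReach E (v, u) (x, y) ∨
      ∃ d ∈ Bset E v u, eLevel E v u d < eLevel E v u c ∧ OuterReach E fL fR v u x y d := by
  have := hrep.1 x; have := hrep.1 u
  have hxy : fR x < fL y := by order
  rcases Bset.eq_or_exists_lower hc with rfl | rfl | ⟨⟨d, hd, hdc, hEdc⟩, -⟩
  · order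
  · order
  have hdx : fL d ≤ fR x := by have := (hrep.adj_iff.1 hEdc).1; order
  by_cases hyd : fL y ≤ fR d
  · exact (giant_step hrep hord ih hxv huy hd (hdc.trans hcn) hdx hyd).imp_right
      fun ⟨c', hc', hc'd, h⟩ => ⟨c', hc', hc'd.trans hdc, h⟩
  · have hdy := hcy.tail_of_lt hrep (hrep.adj_symm hEdc) (hrep.adj_self y) (not_le.1 hyd)
    exact (reach_or_outerReach_of_left hrep hxy hdy hdx).imp_right fun h => ⟨d, hd, hdc, h⟩

theorem right_descent_step (hrep : IsIntervalRep E fL fR) (hord : fR v < fL u)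
    (ih : SidePairsReachableBelow E fL fR v u n) (hxv : fR x ≤ fR v) (huy : fL u ≤ fL y)
    (hc : c ∈ Bset E v u) (hcn : eLevel E v u c < n) (hyc : fR y < fL c)
    (hxc : QReach E (v, u) (x, c)) :
    QReach E (v, u) (x, y) ∨
      ∃ d ∈ Bset E v u, eLevel E v u d < eLevel E v u c ∧ OuterReach E fL fR v u x y d := by
  have := hrep.1 y; have := hrep.1 v
  have hxy : fR x < fL y := by order
  rcases Bset.eq_or_exists_lower hc with rfl | rfl | ⟨⟨d, hd, hdc, hEdc⟩, -⟩
  · order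
  · order
  have hyd : fL y ≤ fR d := by have := (hrep.adj_iff.1 hEdc).2; order
  by_cases hdx : fL d ≤ fR x
  · exact (giant_step hrep hord ih hxv huy hd (hdc.trans hcn) hdx hyd).imp_right
      fun ⟨c', hc', hc'd, h⟩ => ⟨c', hc', hc'd.trans hdc, h⟩
  · have hxd := hxc.tail_of_lt hrep (hrep.adj_self x) (hrep.adj_symm hEdc) (not_le.1 hdx)
    exact (reach_or_outerReach_of_right hrep hxy hxd hyd).imp_right fun h => ⟨d, hd, hdc, h⟩

theorem reach_of_outerReach (hrep : IsIntervalRep E fL fR) (hord : fR v < fL u)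
    (ih : SidePairsReachableBelow E fL fR v u n) (hxv : fR x ≤ fR v) (huy : fL u ≤ fL y)
    (hc : c ∈ Bset E v u) (hcn : eLevel E v u c < n) (hout : OuterReach E fL fR v u x y c) :
    QReach E (v, u) (x, y) := by
  induction hk : eLevel E v u c using Nat.strong_induction_on generalizing c with
  | _ k ihk =>
    have step := hout.elim
      (fun ⟨hcx, hcy⟩ => left_descent_step hrep hord ih hxv huy hc hcn hcx hcy)
      (fun ⟨hyc, hxc⟩ => right_descent_step hrep hord ih hxv huy hc hcn hyc hxc)
    obtain h | ⟨c', hc', hc'c, hout'⟩ := step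
    · exact h
    · exact ihk _ (hk ▸ hc'c) hc' (hc'c.trans hcn) hout' rfl

theorem reach_of_giant (hrep : IsIntervalRep E fL fR) (hord : fR v < fL u)
    (ih : SidePairsReachableBelow E fL fR v u n) (hxv : fR x ≤ fR v) (huy : fL u ≤ fL y)
    {t : V} (ht : t ∈ Bset E v u) (htn : eLevel E v u t < n) (htx : fL t ≤ fR x)
    (hyt : fL y ≤ fR t) : QReach E (v, u) (x, y) := by
  obtain h | ⟨c, hc, hct, hout⟩ := giant_step hrep hord ih hxv huy ht htn htx hyt
  · exact h
  · exact reach_of_outerReach hrep hord ih hxv huy hc (hct.trans htn) hout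

theorem reach_of_left_parent (hrep : IsIntervalRep E fL fR) (hord : fR v < fL u)
    (ih : SidePairsReachableBelow E fL fR v u n) (hy : y ∈ Bset E v u) (hxv : fR x ≤ fR v)
    (huy : fL u ≤ fL y) {z : V} (hz : z ∈ Bset E v u) (hzx : E z x)
    (hlev : eLevel E v u z + eLevel E v u y < n) : QReach E (v, u) (x, y) := by
  have := hrep.1 v
  have hxy : fR x < fL y := by order
  have hzx' := hrep.adj_iff.1 hzx
  by_cases hyz : fL y ≤ fR z
  · exact reach_of_giant hrep hord ih hxv huy hz (by omega) hzx'.1 hyz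
  have hzy : QReach E (v, u) (z, y) := by
    by_cases hzv : fR z ≤ fR v
    · exact ih z hz y hy hzv huy hlev
    · have hvy := ih v left_mem_Bset y hy le_rfl huy (by rw [eLevel_left]; omega)
      exact hvy.tail_of_lt hrep (hrep.adj_of_le (by order) (by order)) (hrep.adj_self y)
        (not_le.1 hyz)
  exact hzy.tail_of_lt hrep hzx (hrep.adj_self y) hxy

theorem reach_of_right_parent (hrep : IsIntervalRep E fL fR) (hord : fR v < fL u)
    (ih : SidePairsReachableBelow E fL fR v u n) (hx : x ∈ Bset E v u) (hxv : fR x ≤ fR v)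
    (huy : fL u ≤ fL y) {z : V} (hz : z ∈ Bset E v u) (hzy : E z y)
    (hlev : eLevel E v u x + eLevel E v u z < n) : QReach E (v, u) (x, y) := by
  have := hrep.1 u
  have hxy : fR x < fL y := by order
  have hzy' := hrep.adj_iff.1 hzy
  by_cases hzx : fL z ≤ fR x
  · exact reach_of_giant hrep hord ih hxv huy hz (by omega) hzx hzy'.2
  have hxz : QReach E (v, u) (x, z) := by
    by_cases huz : fL u ≤ fL z
    · exact ih x hx z hz hxv huz hlev
    · have hxu := ih x hx u right_mem_Bset hxv le_rfl (by rw [eLevel_right]; omega)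
      exact hxu.tail_of_lt hrep (hrep.adj_self x) (hrep.adj_of_le (by order) (by order))
        (not_le.1 hzx)
  exact hxz.tail_of_lt hrep (hrep.adj_self x) hzy hxy

theorem sidePairsReachableBelow (hrep : IsIntervalRep E fL fR) (hord : fR v < fL u) :
    ∀ n, SidePairsReachableBelow E fL fR v u n
  | 0 => fun _ _ _ _ _ _ h => absurd h (Nat.not_lt_zero _)
  | n + 1 => fun x hx y hy hxv huy hlev => by
    have ih := sidePairsReachableBelow hrep hord n
    have := hrep.1 u; have := hrep.1 v
    rcases Bset.eq_or_exists_lower hx with rfl | rfl | ⟨⟨z, hz, hzx, hEzx⟩, -⟩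
    · rcases Bset.eq_or_exists_lower hy with rfl | rfl | ⟨⟨t, ht, hty, hEty⟩, -⟩
      · order
      · exact QReach.refl (hrep.not_adj_of_lt hord)
      · exact reach_of_right_parent hrep hord ih hx hxv huy ht hEty (by omega)
    · order
    · exact reach_of_left_parent hrep hord ih hy hxv huy hz hEzx (by omega)

end SidePairs

theorem stmt15_general {V : Type*} {L : Type} [LinearOrder L] (E : V → V → Prop)
    (fL fR : V → L) (hrep : IsIntervalRep E fL fR)
    (v u : V) (hord : fR v < fL u)
    (x y : V) (hx : x ∈ Bset E v u) (hy : y ∈ Bset E v u)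
    (hxv : fR x ≤ fR v) (huy : fL u ≤ fL y) :
    QReach E (v, u) (x, y) :=
  sidePairsReachableBelow hrep hord _ x hx y hy hxv huy (Nat.lt_succ_self _)

theorem stmt15 {V : Type*} {L : Type} [LinearOrder L] (E : V → V → Prop)
    (hrefl : ∀ w, E w w) (hsymm : ∀ w w', E w w' → E w' w)
    (fL fR : V → L) (hrep : IsIntervalRep E fL fR) (hconn : Connected E)
    (v u : V) (hvu : ¬ E v u) (hord : fR v < fL u)
    (x y : V) (hx : x ∈ Bset E v u) (hy : y ∈ Bset E v u)
    (hxv : fR x ≤ fR v) (huy : fL u ≤ fL y) :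
    QReach E (v, u) (x, y) :=
  stmt15_general E fL fR hrep v u hord x y hx hy hxv huy
end
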